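/- With the quadratic symbols q₀₀, q₁₁ and the symbol b := [2q₁₁ + (m − 2ξ₁ξ₂)q₀₀]/Δ, define b₀(ξ) := g¹¹_u/(4m) + (iξ/(2m))(g⁰¹_{uₜ} + g¹¹_{uₓ}/2) and b₁(ξ) := −(i/4)g⁰¹_{uₜ} + (ξ/(4m))(2f_{uₜuₜ} − g¹¹_u). Then there exists C > 0 such that for all real ξ₁, ξ₂ with ⟨ξ₁⟩ ≤ ⟨ξ₂⟩/20 one has |b(ξ₁,ξ₂) − b₀(ξ₁) − b₁(ξ₁)/ξ₂| ≤ C(1 + |ξ₁|³)/ξ₂², where ⟨ξ⟩ := (1 + ξ²)^{1/2}. -/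

import Mathlib

open Complex

/-- The quadratic symbol `q₀₀(ξ₁,ξ₂) = f_{uₜuₜ} + i g⁰¹_{uₜ}(ξ₁+ξ₂)`. -/
noncomputable def q00 (futut g01ut : ℝ) (ξ₁ ξ₂ : ℝ) : ℂ :=
  (futut : ℂ) + Complex.I * g01ut * ((ξ₁ : ℂ) + ξ₂)

/-- The quadratic symbol
`q₁₁(ξ₁,ξ₂) = f_{uu} − (g¹¹_u/2)(ξ₁² + ξ₂²) − (i g¹¹_{uₓ}/2)(ξ₁ξ₂² + ξ₂ξ₁²)`. -/
noncomputable def q11 (fuu g11u g11ux : ℝ) (ξ₁ ξ₂ : ℝ) : ℂ :=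
  (fuu : ℂ) - (g11u : ℂ)/2 * ((ξ₁ : ℂ)^2 + (ξ₂ : ℂ)^2)
    - Complex.I * g11ux / 2 * ((ξ₁ : ℂ) * (ξ₂ : ℂ)^2 + (ξ₂ : ℂ) * (ξ₁ : ℂ)^2)

/-- The denominator `Δ(ξ₁,ξ₂) = (m − 2ξ₁ξ₂)² − 4(ξ₁² + m)(ξ₂² + m)`. -/
noncomputable def Δc (m ξ₁ ξ₂ : ℝ) : ℂ :=
  ((m : ℂ) - 2*ξ₁*ξ₂)^2 - 4*((ξ₁ : ℂ)^2 + m)*((ξ₂ : ℂ)^2 + m)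

/-- The normal form symbol `b = [2q₁₁ + (m − 2ξ₁ξ₂)q₀₀]/Δ`. -/
noncomputable def bSym (m fuu futut g01ut g11u g11ux : ℝ) (ξ₁ ξ₂ : ℝ) : ℂ :=
  (2 * q11 fuu g11u g11ux ξ₁ ξ₂
    + ((m : ℂ) - 2*ξ₁*ξ₂) * q00 futut g01ut ξ₁ ξ₂) / Δc m ξ₁ ξ₂

/-- First low–high Taylor coefficient
`b₀(ξ) = g¹¹_u/(4m) + (iξ/(2m))(g⁰¹_{uₜ} + g¹¹_{uₓ}/2)`. -/
noncomputable def b0 (m g01ut g11u g11ux : ℝ) (ξ : ℝ) : ℂ :=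
  (g11u : ℂ)/(4*m) + Complex.I * ξ/(2*m) * ((g01ut : ℂ) + (g11ux : ℂ)/2)

/-- Second low–high Taylor coefficient
`b₁(ξ) = −(i/4)g⁰¹_{uₜ} + (ξ/(4m))(2f_{uₜuₜ} − g¹¹_u)`. -/
noncomputable def b1 (m futut g01ut g11u : ℝ) (ξ : ℝ) : ℂ :=
  -(Complex.I/4) * g01ut + (ξ : ℂ)/(4*m) * (2*(futut : ℂ) - g11u)

/-!
Over the common denominator `4mξ₂Δ`, the remainder `b − b₀ − b₁/ξ₂` has a numerator that is cubic
in `ξ₁` and only affine in `ξ₂`: `b₀` and `b₁` are exactly what cancels its `ξ₂³` and `ξ₂²` terms.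
Since `−Δ = 4m(ξ₁² + ξ₁ξ₂ + ξ₂²) + 3m² ≥ 2mξ₂²`, the remainder is `O((1 + |ξ₁|³)|ξ₂| / |ξ₂|³)`
once `|ξ₂| ≥ 1`.
-/

theorem pow_le_one_add_pow {a : ℝ} (ha : 0 ≤ a) {i n : ℕ} (hin : i ≤ n) : a ^ i ≤ 1 + a ^ n := by
  rcases le_total a 1 with h | h
  · linarith [pow_le_one₀ (n := i) ha h, pow_nonneg ha n]
  · linarith [pow_le_pow_right₀ h hin]

theorem norm_sum_mul_pow_le {𝕜 : Type*} [NormedDivisionRing 𝕜] {n : ℕ} (c : Fin (n + 1) → 𝕜)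
    (x : 𝕜) : ‖∑ i, c i * x ^ (i : ℕ)‖ ≤ (∑ i, ‖c i‖) * (1 + ‖x‖ ^ n) := by
  rw [Finset.sum_mul]
  refine (norm_sum_le _ _).trans (Finset.sum_le_sum fun i _ => ?_)
  rw [norm_mul, norm_pow]
  exact mul_le_mul_of_nonneg_left (pow_le_one_add_pow (norm_nonneg x) (Fin.is_le i)) (norm_nonneg _)

theorem norm_sum_mul_pow_add_sum_mul_pow_mul_le {𝕜 : Type*} [NormedDivisionRing 𝕜] {n : ℕ}
    (c d : Fin (n + 1) → 𝕜) (x y : 𝕜) (hy : 1 ≤ ‖y‖) :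
    ‖∑ i, c i * x ^ (i : ℕ) + (∑ i, d i * x ^ (i : ℕ)) * y‖
      ≤ (∑ i, ‖c i‖ + ∑ i, ‖d i‖) * (1 + ‖x‖ ^ n) * ‖y‖ := by
  have hc := norm_sum_mul_pow_le c x
  have hd := norm_sum_mul_pow_le d x
  have hP : 0 ≤ (∑ i, ‖c i‖) * (1 + ‖x‖ ^ n) := by positivity
  calc _ ≤ ‖∑ i, c i * x ^ (i : ℕ)‖ + ‖∑ i, d i * x ^ (i : ℕ)‖ * ‖y‖ := by
        rw [← norm_mul]; exact norm_add_le _ _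
    _ ≤ (∑ i, ‖c i‖) * (1 + ‖x‖ ^ n) * ‖y‖ + (∑ i, ‖d i‖) * (1 + ‖x‖ ^ n) * ‖y‖ := by
        gcongr
        exact hc.trans (le_mul_of_one_le_right hP hy)
    _ = _ := by ring

theorem one_le_abs_of_sqrt_one_add_sq_le {a b : ℝ} (h : √(1 + a ^ 2) ≤ √(1 + b ^ 2) / 20) :
    1 ≤ |b| := by
  have ha : 1 ≤ √(1 + a ^ 2) := Real.one_le_sqrt.mpr (le_add_of_nonneg_right (sq_nonneg a))
  have hb : 20 ≤ √(1 + b ^ 2) := by linarith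
  have hb2 : 400 ≤ 1 + b ^ 2 := by nlinarith [Real.sq_sqrt (by positivity : (0 : ℝ) ≤ 1 + b ^ 2)]
  exact (one_le_sq_iff_one_le_abs b).mp (by linarith)

def negΔ (m ξ₁ ξ₂ : ℝ) : ℝ := 4 * m * (ξ₁ ^ 2 + ξ₁ * ξ₂ + ξ₂ ^ 2) + 3 * m ^ 2

theorem Δc_eq_neg_negΔ (m ξ₁ ξ₂ : ℝ) : Δc m ξ₁ ξ₂ = -(negΔ m ξ₁ ξ₂ : ℂ) := by
  unfold Δc negΔ; push_cast; ring

theorem two_mul_mul_sq_le_negΔ {m : ℝ} (hm : 0 ≤ m) (ξ₁ ξ₂ : ℝ) :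
    2 * m * ξ₂ ^ 2 ≤ negΔ m ξ₁ ξ₂ := by
  unfold negΔ; nlinarith [mul_nonneg hm (sq_nonneg (2 * ξ₁ + ξ₂)), sq_nonneg m]

theorem negΔ_pos {m : ℝ} (hm : 0 < m) (ξ₁ ξ₂ : ℝ) : 0 < negΔ m ξ₁ ξ₂ := by
  unfold negΔ
  nlinarith [mul_nonneg hm.le (sq_nonneg (2 * ξ₁ + ξ₂)), mul_nonneg hm.le (sq_nonneg ξ₂)]

/-- Over the common denominator `4mξ₂Δ`, the numerator of `b − b₀ − b₁/ξ₂` is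
`∑ remLow i * ξ₁^i + (∑ remHigh i * ξ₁^i) * ξ₂`. -/
def remLow (m futut g01ut g11u : ℝ) : Fin 4 → ℂ :=
  ![-3 * I * m ^ 3 * g01ut, m ^ 2 * (6 * futut - 3 * g11u), -4 * I * m ^ 2 * g01ut,
    m * (8 * futut - 4 * g11u)]

def remHigh (m fuu futut g01ut g11u g11ux : ℝ) : Fin 4 → ℂ :=
  ![m * (8 * fuu + 3 * m * g11u + 4 * m * futut), I * m ^ 2 * (3 * g11ux + 6 * g01ut),
    m * (8 * futut - 4 * g11u), I * m * (4 * g11ux + 8 * g01ut)]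

theorem bSym_sub_b0_sub_b1_div {m : ℝ} (hm : 0 < m) (fuu futut g01ut g11u g11ux : ℝ) {ξ₁ ξ₂ : ℝ}
    (hξ₂ : ξ₂ ≠ 0) :
    bSym m fuu futut g01ut g11u g11ux ξ₁ ξ₂ - b0 m g01ut g11u g11ux ξ₁
        - b1 m futut g01ut g11u ξ₁ / ξ₂
      = (∑ i, remLow m futut g01ut g11u i * (ξ₁ : ℂ) ^ (i : ℕ)
          + (∑ i, remHigh m fuu futut g01ut g11u g11ux i * (ξ₁ : ℂ) ^ (i : ℕ)) * ξ₂)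
        / (4 * m * ξ₂ * Δc m ξ₁ ξ₂) := by
  have hΔ : Δc m ξ₁ ξ₂ ≠ 0 := by
    rw [Δc_eq_neg_negΔ, neg_ne_zero, Complex.ofReal_ne_zero]; exact (negΔ_pos hm ξ₁ ξ₂).ne'
  have hm' : (m : ℂ) ≠ 0 := Complex.ofReal_ne_zero.mpr hm.ne'
  have hξ₂' : (ξ₂ : ℂ) ≠ 0 := Complex.ofReal_ne_zero.mpr hξ₂
  simp only [Fin.sum_univ_four, remLow, remHigh, Matrix.cons_val, Fin.coe_ofNat_eq_mod,
    Nat.reduceMod, pow_zero, pow_one, mul_one]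
  unfold bSym b0 b1
  field_simp
  unfold q00 q11 Δc
  ring

theorem norm_bSym_sub_b0_sub_b1_div_le {m : ℝ} (hm : 0 < m) (fuu futut g01ut g11u g11ux : ℝ)
    {ξ₁ ξ₂ : ℝ} (hξ₂ : 1 ≤ |ξ₂|) :
    ‖bSym m fuu futut g01ut g11u g11ux ξ₁ ξ₂ - b0 m g01ut g11u g11ux ξ₁
        - b1 m futut g01ut g11u ξ₁ / ξ₂‖
      ≤ (∑ i, ‖remLow m futut g01ut g11u i‖ + ∑ i, ‖remHigh m fuu futut g01ut g11u g11ux i‖)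
          / (8 * m ^ 2) * (1 + |ξ₁| ^ 3) / ξ₂ ^ 2 := by
  have hξ₂0 : ξ₂ ≠ 0 := abs_pos.mp (one_pos.trans_le hξ₂)
  have hN := norm_sum_mul_pow_add_sum_mul_pow_mul_le (remLow m futut g01ut g11u)
    (remHigh m fuu futut g01ut g11u g11ux) (ξ₁ : ℂ) ξ₂ (by rwa [Complex.norm_real])
  set S := ∑ i, ‖remLow m futut g01ut g11u i‖ + ∑ i, ‖remHigh m fuu futut g01ut g11u g11ux i‖
  have hD := negΔ_pos hm ξ₁ ξ₂
  have hden : ‖4 * (m : ℂ) * ξ₂ * -(negΔ m ξ₁ ξ₂ : ℂ)‖ = 4 * m * |ξ₂| * negΔ m ξ₁ ξ₂ := by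
    simp [abs_of_pos hm, abs_of_pos hD]
  rw [bSym_sub_b0_sub_b1_div hm _ _ _ _ _ hξ₂0, Δc_eq_neg_negΔ, norm_div, hden,
    div_le_div_iff₀ (by positivity) (by positivity)]
  simp only [Complex.norm_real, Real.norm_eq_abs] at hN
  calc _ ≤ S * (1 + |ξ₁| ^ 3) * |ξ₂| * ξ₂ ^ 2 := by gcongr
    _ = S / (8 * m ^ 2) * (1 + |ξ₁| ^ 3) * (4 * m * |ξ₂| * (2 * m * ξ₂ ^ 2)) := by
        field_simp; ring
    _ ≤ _ := by gcongr; exact two_mul_mul_sq_le_negΔ hm.le ξ₁ ξ₂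

theorem bSym_low_high_expansion_general (m fuu futut g01ut g11u g11ux : ℝ)
    (hm : 0 < m) :
    ∃ C > 0, ∀ ξ₁ ξ₂ : ℝ,
      Real.sqrt (1 + ξ₁^2) ≤ Real.sqrt (1 + ξ₂^2) / 20 →
      ‖bSym m fuu futut g01ut g11u g11ux ξ₁ ξ₂
          - b0 m g01ut g11u g11ux ξ₁ - b1 m futut g01ut g11u ξ₁ / ξ₂‖
        ≤ C * (1 + |ξ₁|^3) / ξ₂^2 := by
  set S := ∑ i, ‖remLow m futut g01ut g11u i‖ + ∑ i, ‖remHigh m fuu futut g01ut g11u g11ux i‖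
  refine ⟨S / (8 * m ^ 2) + 1, by positivity, fun ξ₁ ξ₂ h => ?_⟩
  refine (norm_bSym_sub_b0_sub_b1_div_le hm fuu futut g01ut g11u g11ux
    (one_le_abs_of_sqrt_one_add_sq_le h)).trans ?_
  gcongr
  linarith

/-- Low–high symbol expansion of the normal form correction `B`:
`|b(ξ₁,ξ₂) − b₀(ξ₁) − b₁(ξ₁)/ξ₂| ≤ C(1 + |ξ₁|³)/ξ₂²` for `⟨ξ₁⟩ ≤ ⟨ξ₂⟩/20`. -/
theorem bSym_low_high_expansion (m fuu futut futu g01u g01ut g01ux g11u g11ut g11ux : ℝ)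
    (hm : 0 < m) :
    ∃ C > 0, ∀ ξ₁ ξ₂ : ℝ,
      Real.sqrt (1 + ξ₁^2) ≤ Real.sqrt (1 + ξ₂^2) / 20 →
      ‖bSym m fuu futut g01ut g11u g11ux ξ₁ ξ₂
          - b0 m g01ut g11u g11ux ξ₁ - b1 m futut g01ut g11u ξ₁ / ξ₂‖
        ≤ C * (1 + |ξ₁|^3) / ξ₂^2 :=
  bSym_low_high_expansion_general m fuu futut g01ut g11u g11ux hm
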